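/- Let A be a strong M-tensor of order m and dimension n (m ≥ 2) and let b ∈ ℝ^n with b ≥ 0. Then the problem (P1) of minimizing e^T x subject to x ≥ 0 and A x^{m-1} − b = 0 has a unique optimal solution, and this unique solution is also an optimal solution of the problem (P0) of minimizing ‖x‖₀ subject to x ≥ 0, A x^{m-1} − b ≥ 0, ⟨x, A x^{m-1} − b⟩ = 0. -/

import Mathlib

/-- `(A x^{m-1})_i = ∑_{i₂,…,i_m} a_{i i₂ … i_m} x_{i₂} ⋯ x_{i_m}` (real vectors). -/
def tApply {n k : ℕ} (A : Fin n → (Fin k → Fin n) → ℝ) (x : Fin n → ℝ) : Fin n → ℝ :=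
  fun i => ∑ j : Fin k → Fin n, A i j * ∏ t, x (j t)

/-- `λ ∈ ℂ` is an eigenvalue of the order-`k+1` tensor `B` if `(B x^k)_i = λ x_i^k`
for all `i`, for some nonzero complex vector `x`. -/
def IsEigenvalue {n k : ℕ} (B : Fin n → (Fin k → Fin n) → ℝ) (lam : ℂ) : Prop :=
  ∃ x : Fin n → ℂ, x ≠ 0 ∧
    ∀ i, (∑ j : Fin k → Fin n, (B i j : ℂ) * ∏ t, x (j t)) = lam * x i ^ k

/-- `A` is a strong M-tensor: `A = s I - B` with `B ≥ 0`, `s > 0`, and `|λ| < s` for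
every eigenvalue `λ` of `B`; here `I` is the identity tensor. -/
def IsStrongMTensor {n k : ℕ} (A : Fin n → (Fin k → Fin n) → ℝ) : Prop :=
  ∃ (s : ℝ) (B : Fin n → (Fin k → Fin n) → ℝ),
    0 < s ∧ (∀ i j, 0 ≤ B i j) ∧
    (∀ lam : ℂ, IsEigenvalue B lam → ‖lam‖ < s) ∧
    (∀ i j, A i j = s * (if ∀ t, j t = i then (1 : ℝ) else 0) - B i j)

/-- `‖x‖₀`, the number of nonzero components of `x`. -/
noncomputable def l0 {n : ℕ} (x : Fin n → ℝ) : ℕ :=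
  (Finset.univ.filter (fun i => x i ≠ 0)).card

/-!
Write `A = s I - B` with `B ≥ 0`. For `x ≥ 0`, `A x^{m-1} ≥ b` says that `x` is a
supersolution: `B x^{m-1} + b ≤ s x^{[m-1]}`. Since `x ↦ B x^{m-1}` is monotone on the
nonnegative orthant, the componentwise infimum of all supersolutions is again one, and it
is an exact solution, because lowering a coordinate where the inequality is strict would
give a smaller supersolution. Lying below every feasible point of `(P₁)` and of `(P₀)`, it
minimizes both `eᵀx` (uniquely) and `‖x‖₀`.

Supersolutions exist once some `v ≥ 0`, `ε > 0` satisfy `B v^{m-1} + ε ≤ s v^{[m-1]}`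
(scale `v`). Otherwise, for each `ε > 0` the least `λ` admitting `x` on the simplex with
`B x^{m-1} + ε ≤ λ x^{[m-1]}` exceeds `s`; a minimizer satisfies this with equality (by the
same lowering argument), and as `ε → 0` a limit point is a real eigenpair of `B` with
eigenvalue `≥ s`, against the spectral condition.
-/

open Filter Topology Function

section Scalar

variable {k : ℕ}

lemma pos_of_mul_pow_pos {c t : ℝ} (hk : k ≠ 0) (ht : 0 ≤ t) (h : 0 < c * t ^ k) : 0 < t :=
  ht.lt_of_ne <| by rintro rfl; simp [zero_pow hk] at h

lemma exists_pos_lt_lt_mul_pow {a c t : ℝ} (ht : 0 < t) (h : a < c * t ^ k) :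
    ∃ r, 0 < r ∧ r < t ∧ a < c * r ^ k := by
  have hnear : ∀ᶠ r in 𝓝 t, a < c * r ^ k :=
    ((continuous_const.mul (continuous_pow k)).tendsto t).eventually_const_lt h
  obtain ⟨r, hr, hrt⟩ := ((hnear.filter_mono nhdsWithin_le_nhds).and (Ioo_mem_nhdsLT ht)).exists
  exact ⟨r, hrt.1, hrt.2, hr⟩

end Scalar

section TensorApplication

variable {n k : ℕ}

lemma tApply_nonneg {B : Fin n → (Fin k → Fin n) → ℝ} (hB : ∀ i j, 0 ≤ B i j)
    {x : Fin n → ℝ} (hx : ∀ i, 0 ≤ x i) (i : Fin n) : 0 ≤ tApply B x i :=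
  Finset.sum_nonneg fun j _ => mul_nonneg (hB i j) (Finset.prod_nonneg fun _ _ => hx _)

lemma tApply_mono {B : Fin n → (Fin k → Fin n) → ℝ} (hB : ∀ i j, 0 ≤ B i j)
    {x y : Fin n → ℝ} (hx : ∀ i, 0 ≤ x i) (hxy : x ≤ y) (i : Fin n) :
    tApply B x i ≤ tApply B y i :=
  Finset.sum_le_sum fun j _ => mul_le_mul_of_nonneg_left
    (Finset.prod_le_prod (fun _ _ => hx _) (fun _ _ => hxy _)) (hB i j)

lemma tApply_smul (B : Fin n → (Fin k → Fin n) → ℝ) (c : ℝ) (x : Fin n → ℝ) (i : Fin n) :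
    tApply B (c • x) i = c ^ k * tApply B x i := by
  simp only [tApply, Pi.smul_apply, smul_eq_mul, Finset.prod_mul_distrib, Finset.prod_const,
    Finset.card_univ, Fintype.card_fin, Finset.mul_sum]
  exact Finset.sum_congr rfl fun j _ => by ring

lemma continuous_tApply (B : Fin n → (Fin k → Fin n) → ℝ) (i : Fin n) :
    Continuous fun x : Fin n → ℝ => tApply B x i := by
  unfold tApply
  fun_prop

lemma tApply_eq_mul_pow_sub {s : ℝ} {A B : Fin n → (Fin k → Fin n) → ℝ}
    (hAB : ∀ i j, A i j = s * (if ∀ t, j t = i then (1 : ℝ) else 0) - B i j)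
    (x : Fin n → ℝ) (i : Fin n) : tApply A x i = s * x i ^ k - tApply B x i := by
  classical
  simp [tApply, hAB, sub_mul, Finset.sum_sub_distrib, ← funext_iff]

end TensorApplication

lemma l0_mono {n : ℕ} {x y : Fin n → ℝ} (hx : ∀ i, 0 ≤ x i) (hxy : x ≤ y) : l0 x ≤ l0 y :=
  Finset.card_le_card fun i => by
    simp only [Finset.mem_filter, Finset.mem_univ, true_and]
    exact fun hxi hyi => hxi (le_antisymm (hyi ▸ hxy i) (hx i))

section Supersolution

variable {n k : ℕ} {B : Fin n → (Fin k → Fin n) → ℝ} {s : ℝ} {b x : Fin n → ℝ}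

def IsSupersolution (B : Fin n → (Fin k → Fin n) → ℝ) (s : ℝ) (b x : Fin n → ℝ) : Prop :=
  (∀ i, 0 ≤ x i) ∧ ∀ i, tApply B x i + b i ≤ s * x i ^ k

lemma isSupersolution_iff_le_tApply {A : Fin n → (Fin k → Fin n) → ℝ}
    (hAB : ∀ i j, A i j = s * (if ∀ t, j t = i then (1 : ℝ) else 0) - B i j)
    (hx : ∀ i, 0 ≤ x i) : IsSupersolution B s b x ↔ ∀ i, b i ≤ tApply A x i := by
  simp only [IsSupersolution, hx, implies_true, true_and, tApply_eq_mul_pow_sub hAB]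
  exact forall_congr' fun i => by constructor <;> intro h <;> linarith

lemma isClosed_setOf_isSupersolution (B : Fin n → (Fin k → Fin n) → ℝ) (b : Fin n → ℝ) :
    IsClosed {p : (Fin n → ℝ) × ℝ | IsSupersolution B p.2 b p.1} := by
  simp only [IsSupersolution, Set.ofPred_and, Set.ofPred_forall]
  refine (isClosed_iInter fun i => isClosed_le (by fun_prop) (by fun_prop)).inter
    (isClosed_iInter fun i => isClosed_le ?_ (by fun_prop))
  exact ((continuous_tApply B i).comp continuous_fst).add continuous_const

namespace IsSupersolution

lemma mono_param {s' : ℝ} (hx : IsSupersolution B s b x) (hs : s ≤ s') :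
    IsSupersolution B s' b x :=
  ⟨hx.1, fun i => (hx.2 i).trans
    (mul_le_mul_of_nonneg_right hs (pow_nonneg (hx.1 i) k))⟩

lemma anti_const {b' : Fin n → ℝ} (hx : IsSupersolution B s b x) (hb : b' ≤ b) :
    IsSupersolution B s b' x :=
  ⟨hx.1, fun i => by linarith [hx.2 i, hb i]⟩

lemma smul (hx : IsSupersolution B s b x) {c : ℝ} (hc : 0 ≤ c) :
    IsSupersolution B s (c ^ k • b) (c • x) := by
  refine ⟨fun i => mul_nonneg hc (hx.1 i), fun i => ?_⟩
  simp only [tApply_smul, Pi.smul_apply, smul_eq_mul, mul_pow]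
  nlinarith [hx.2 i, pow_nonneg hc k]

lemma sub_param {b' : Fin n → ℝ} {d : ℝ} (hx : IsSupersolution B s b' x) (hd : 0 ≤ d)
    (hbd : ∀ i, b i + d ≤ b' i) (hx1 : ∀ i, x i ≤ 1) : IsSupersolution B (s - d) b x := by
  refine ⟨hx.1, fun i => ?_⟩
  have hpow : x i ^ k ≤ 1 := pow_le_one₀ (hx.1 i) (hx1 i)
  nlinarith [hx.2 i, hbd i]

lemma pos (hB : ∀ i j, 0 ≤ B i j) (hk : k ≠ 0) (hx : IsSupersolution B s b x) {i : Fin n}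
    (hb : 0 < b i) : 0 < x i := by
  refine pos_of_mul_pow_pos (c := s) hk (hx.1 i) ?_
  linarith [hx.2 i, tApply_nonneg hB hx.1 i]

lemma param_pos (hB : ∀ i j, 0 ≤ B i j) (hx : IsSupersolution B s b x) {i : Fin n}
    (hb : 0 < b i) : 0 < s :=
  pos_of_mul_pos_left (by linarith [hx.2 i, tApply_nonneg hB hx.1 i]) (pow_nonneg (hx.1 i) k)

/-- Lowering `x i` only decreases `B x^k`, and by continuity a strict inequality at `i`
survives a small decrease. -/
lemma exists_lt (hB : ∀ i j, 0 ≤ B i j) (hk : k ≠ 0)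
    (hx : IsSupersolution B s b x) {i : Fin n} (hb : 0 ≤ b i)
    (hi : tApply B x i + b i < s * x i ^ k) :
    ∃ y, IsSupersolution B s b y ∧ y ≤ x ∧ y i < x i := by
  have hxi : 0 < x i :=
    pos_of_mul_pow_pos (c := s) hk (hx.1 i) (by linarith [tApply_nonneg hB hx.1 i])
  obtain ⟨r, hr0, hrx, hr⟩ := exists_pos_lt_lt_mul_pow hxi hi
  have hyx : update x i r ≤ x := fun j => by
    rcases eq_or_ne j i with rfl | hj
    · simpa using hrx.le
    · simp [hj]
  have hy0 : ∀ j, 0 ≤ update x i r j := fun j => by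
    rcases eq_or_ne j i with rfl | hj
    · simpa using hr0.le
    · simpa [hj] using hx.1 j
  refine ⟨update x i r, ⟨hy0, fun j => ?_⟩, hyx, by simpa using hrx⟩
  have hmono := tApply_mono hB hy0 hyx j
  rcases eq_or_ne j i with rfl | hj
  · simp only [update_self]
    linarith
  · simp only [update_of_ne hj]
    linarith [hx.2 j]

end IsSupersolution

end Supersolution

section LeastSupersolution

variable {n k : ℕ} {B : Fin n → (Fin k → Fin n) → ℝ} {s : ℝ} {b : Fin n → ℝ}

noncomputable def leastSupersolution (B : Fin n → (Fin k → Fin n) → ℝ) (s : ℝ)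
    (b : Fin n → ℝ) : Fin n → ℝ :=
  fun i => sInf ((fun z => z i) '' {z | IsSupersolution B s b z})

lemma bddBelow_image_isSupersolution (i : Fin n) :
    BddBelow ((fun z => z i) '' {z | IsSupersolution B s b z}) :=
  ⟨0, by rintro _ ⟨z, hz, rfl⟩; exact hz.1 i⟩

lemma leastSupersolution_le {z : Fin n → ℝ} (hz : IsSupersolution B s b z) :
    leastSupersolution B s b ≤ z :=
  fun i => csInf_le (bddBelow_image_isSupersolution i) ⟨z, hz, rfl⟩

/-- Monotonicity of `B` bounds `B x^k + b` at the infimum by `s z i ^ k` for every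
supersolution `z`; the bound passes to the infimum of the `z i` because it is a closed
condition. -/
lemma isSupersolution_leastSupersolution (hB : ∀ i j, 0 ≤ B i j)
    (hne : ∃ z, IsSupersolution B s b z) :
    IsSupersolution B s b (leastSupersolution B s b) := by
  obtain ⟨u, hu⟩ := hne
  have hne_image (i : Fin n) : ((fun z => z i) '' {z | IsSupersolution B s b z}).Nonempty :=
    ⟨u i, u, hu, rfl⟩
  have hnonneg : ∀ i, 0 ≤ leastSupersolution B s b i := fun i =>
    le_csInf (hne_image i) (by rintro _ ⟨z, hz, rfl⟩; exact hz.1 i)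
  refine ⟨hnonneg, fun i => ?_⟩
  have hclosed : IsClosed {r : ℝ | tApply B (leastSupersolution B s b) i + b i ≤ s * r ^ k} :=
    isClosed_le continuous_const (by fun_prop)
  refine closure_minimal ?_ hclosed
    (csInf_mem_closure (hne_image i) (bddBelow_image_isSupersolution i))
  rintro _ ⟨z, hz, rfl⟩
  show _ ≤ s * z i ^ k
  linarith [tApply_mono hB hnonneg (leastSupersolution_le hz) i, hz.2 i]

lemma tApply_leastSupersolution (hB : ∀ i j, 0 ≤ B i j) (hk : k ≠ 0) (hb : ∀ i, 0 ≤ b i)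
    (hne : ∃ z, IsSupersolution B s b z) (i : Fin n) :
    tApply B (leastSupersolution B s b) i + b i = s * leastSupersolution B s b i ^ k := by
  have hsup := isSupersolution_leastSupersolution hB hne
  refine (hsup.2 i).eq_of_not_lt fun hlt => ?_
  obtain ⟨y, hy, -, hyi⟩ := hsup.exists_lt hB hk (hb i) hlt
  exact (leastSupersolution_le hy i).not_gt hyi

end LeastSupersolution

section PerturbedEigenpairs

variable {n k : ℕ} {B : Fin n → (Fin k → Fin n) → ℝ}

lemma le_one_of_sum_eq_one {x : Fin n → ℝ} (hx : ∀ i, 0 ≤ x i) (hsum : ∑ i, x i = 1)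
    (i : Fin n) : x i ≤ 1 :=
  hsum ▸ Finset.single_le_sum (fun j _ => hx j) (Finset.mem_univ i)

/-- Otherwise lower a strict coordinate and renormalize: the constant term grows by the
factor `σ⁻¹ ^ k > 1`, and the surplus lets `lam` decrease. -/
lemma IsSupersolution.tApply_add_eq_of_minimal (hB : ∀ i j, 0 ≤ B i j) (hk : k ≠ 0)
    {ε lam : ℝ} (hε : 0 < ε) {x : Fin n → ℝ} (hx : IsSupersolution B lam (fun _ => ε) x)
    (hsum : ∑ i, x i = 1)
    (hmin : ∀ μ y, IsSupersolution B μ (fun _ => ε) y → ∑ i, y i = 1 → lam ≤ μ)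
    (i : Fin n) : tApply B x i + ε = lam * x i ^ k := by
  refine (hx.2 i).eq_of_not_lt fun hlt => ?_
  obtain ⟨y, hy, hyx, hyi⟩ := hx.exists_lt hB hk hε.le hlt
  set σ := ∑ j, y j
  have hσ1 : σ < 1 := hsum ▸ Finset.sum_lt_sum (fun j _ => hyx j) ⟨i, Finset.mem_univ _, hyi⟩
  have hσ0 : 0 < σ :=
    Finset.sum_pos' (fun j _ => hy.1 j) ⟨i, Finset.mem_univ _, hy.pos hB hk hε⟩
  have hz := hy.smul (inv_nonneg.2 hσ0.le)
  have hzsum : ∑ j, (σ⁻¹ • y) j = 1 := by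
    simp only [Pi.smul_apply, smul_eq_mul, ← Finset.mul_sum]
    exact inv_mul_cancel₀ hσ0.ne'
  have hd : 0 < σ⁻¹ ^ k * ε - ε := by
    have := one_lt_pow₀ ((one_lt_inv₀ hσ0).2 hσ1) hk
    nlinarith
  have hlower := hz.sub_param (b := fun _ => ε) hd.le
    (fun _ => by simp only [Pi.smul_apply, smul_eq_mul]; linarith)
    (le_one_of_sum_eq_one hz.1 hzsum)
  linarith [hmin _ _ hlower hzsum]

lemma exists_tApply_add_eq_mul_pow (hn : 0 < n) (hB : ∀ i j, 0 ≤ B i j) (hk : k ≠ 0) :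
    ∃ C, ∀ ε, 0 < ε → ε ≤ 1 → ∃ (x : Fin n → ℝ) (lam : ℝ), (∀ i, 0 ≤ x i) ∧
      ∑ i, x i = 1 ∧ lam ≤ C ∧ ∀ i, tApply B x i + ε = lam * x i ^ k := by
  set C := ∑ i, tApply B 1 i + (n : ℝ) ^ k
  refine ⟨C, fun ε hε hε1 => ?_⟩
  set K := {p : (Fin n → ℝ) × ℝ |
    IsSupersolution B p.2 (fun _ => ε) p.1 ∧ ∑ i, p.1 i = 1 ∧ p.2 ≤ C}
  have hKcompact : IsCompact K := by
    refine (isCompact_Icc (a := ((0 : Fin n → ℝ), (0 : ℝ))) (b := (1, C))).of_isClosed_subset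
      ((isClosed_setOf_isSupersolution B _).inter
        ((isClosed_eq (continuous_finsetSum _ fun i _ =>
          (continuous_apply i).comp continuous_fst) continuous_const).inter
          (isClosed_le continuous_snd continuous_const))) ?_
    rintro ⟨x, lam⟩ ⟨hx, hsum, hC⟩
    exact ⟨⟨hx.1, (hx.param_pos hB (i := ⟨0, hn⟩) hε).le⟩,
      ⟨le_one_of_sum_eq_one hx.1 hsum, hC⟩⟩
  have hn' : (0 : ℝ) < n := Nat.cast_pos.2 hn
  have hKne : ((n : ℝ)⁻¹ • (1 : Fin n → ℝ), C) ∈ K := by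
    refine ⟨⟨fun i => by simp [hn'.le], fun i => ?_⟩, by simp [hn'.ne'], le_rfl⟩
    have hi : tApply B 1 i ≤ ∑ j, tApply B 1 j :=
      Finset.single_le_sum (fun j _ => tApply_nonneg hB (fun _ => zero_le_one) j)
        (Finset.mem_univ i)
    have hpow : ((n : ℝ)⁻¹) ^ k * (n : ℝ) ^ k = 1 := by
      rw [← mul_pow, inv_mul_cancel₀ hn'.ne', one_pow]
    simp only [tApply_smul, Pi.smul_apply, Pi.one_apply, smul_eq_mul, mul_one, C]
    nlinarith [pow_nonneg (inv_nonneg.2 hn'.le) k]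
  obtain ⟨⟨x, lam⟩, ⟨hx, hsum, hC⟩, hmin⟩ :=
    hKcompact.exists_isMinOn ⟨_, hKne⟩ continuous_snd.continuousOn
  refine ⟨x, lam, hx.1, hsum, hC, hx.tApply_add_eq_of_minimal hB hk hε hsum fun μ y hy hysum => ?_⟩
  rcases le_or_gt μ C with hμ | hμ
  · exact hmin (a := (y, μ)) ⟨hy, hysum, hμ⟩
  · exact hC.trans hμ.le

end PerturbedEigenpairs

section Semipositivity

variable {n k : ℕ} {B : Fin n → (Fin k → Fin n) → ℝ} {s : ℝ}

lemma isEigenvalue_ofReal {x : Fin n → ℝ} (hx : x ≠ 0) {lam : ℝ}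
    (h : ∀ i, tApply B x i = lam * x i ^ k) : IsEigenvalue B lam := by
  refine ⟨fun i => (x i : ℂ), fun h0 => hx (funext fun i => by simpa using congrFun h0 i),
    fun i => ?_⟩
  have := congrArg Complex.ofReal (h i)
  push_cast [tApply] at this
  exact this

lemma exists_isEigenvalue_of_tendsto {C : ℝ} (x : ℕ → Fin n → ℝ) (lam ε : ℕ → ℝ)
    (hx : ∀ j i, 0 ≤ x j i) (hsum : ∀ j, ∑ i, x j i = 1) (hlam : ∀ j, lam j ∈ Set.Icc s C)
    (hε : Tendsto ε atTop (𝓝 0)) (heq : ∀ j i, tApply B (x j) i + ε j = lam j * x j i ^ k) :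
    ∃ μ : ℝ, s ≤ μ ∧ IsEigenvalue B μ := by
  have hK : IsCompact (Set.Icc ((0 : Fin n → ℝ), s) (1, C) ∩ {p | ∑ i, p.1 i = 1}) :=
    isCompact_Icc.inter_right (isClosed_eq (continuous_finsetSum _ fun i _ =>
      (continuous_apply i).comp continuous_fst) continuous_const)
  obtain ⟨⟨x₀, μ⟩, ⟨⟨⟨-, hsμ⟩, -⟩, hsum₀⟩, φ, hφ, hlim⟩ :=
    hK.tendsto_subseq (x := fun j => (x j, lam j)) fun j =>
      ⟨⟨⟨hx j, (hlam j).1⟩, ⟨le_one_of_sum_eq_one (hx j) (hsum j), (hlam j).2⟩⟩, hsum j⟩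
  have hxlim : Tendsto (fun j => x (φ j)) atTop (𝓝 x₀) := (continuous_fst.tendsto _).comp hlim
  have hlamlim : Tendsto (fun j => lam (φ j)) atTop (𝓝 μ) := (continuous_snd.tendsto _).comp hlim
  refine ⟨μ, hsμ, isEigenvalue_ofReal (x := x₀) ?_ fun i => ?_⟩
  · rintro rfl
    simp at hsum₀
  · have hl : Tendsto (fun j => tApply B (x (φ j)) i + ε (φ j)) atTop
        (𝓝 (tApply B x₀ i + 0)) :=
      (((continuous_tApply B i).tendsto x₀).comp hxlim).add (hε.comp hφ.tendsto_atTop)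
    have hr : Tendsto (fun j => lam (φ j) * x (φ j) i ^ k) atTop (𝓝 (μ * x₀ i ^ k)) :=
      hlamlim.mul ((((continuous_apply i).tendsto x₀).comp hxlim).pow k)
    simp only [heq] at hl
    simpa using tendsto_nhds_unique hl hr

/-- If the perturbed eigenvalues for `ε = 1 / (j + 1)` all stayed `≥ s`, a limit point would
be an eigenvalue `≥ s`. -/
lemma exists_isSupersolution_const (hB : ∀ i j, 0 ≤ B i j) (hk : k ≠ 0)
    (heig : ∀ lam : ℂ, IsEigenvalue B lam → ‖lam‖ < s) :
    ∃ (v : Fin n → ℝ) (ε : ℝ), 0 < ε ∧ IsSupersolution B s (fun _ => ε) v := by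
  rcases n.eq_zero_or_pos with rfl | hn
  · exact ⟨0, 1, one_pos, finZeroElim, finZeroElim⟩
  obtain ⟨C, hC⟩ := exists_tApply_add_eq_mul_pow hn hB hk
  have hε (j : ℕ) : (0 : ℝ) < 1 / (j + 1) := Nat.one_div_pos_of_nat
  choose x lam hx hsum hlamC heq using fun j : ℕ =>
    hC (1 / (j + 1)) (hε j) (div_le_one_of_le₀ (by simp) (by positivity))
  by_contra! hnone
  have hslam (j : ℕ) : s ≤ lam j := by
    by_contra! hlt
    exact hnone (x j) _ (hε j)
      (IsSupersolution.mono_param ⟨hx j, fun i => (heq j i).le⟩ hlt.le)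
  obtain ⟨μ, hsμ, hμ⟩ := exists_isEigenvalue_of_tendsto x lam _ hx hsum
    (fun j => ⟨hslam j, hlamC j⟩) tendsto_one_div_add_atTop_nhds_zero_nat heq
  have := heig _ hμ
  rw [Complex.norm_real] at this
  linarith [Real.le_norm_self μ]

lemma exists_isSupersolution (hB : ∀ i j, 0 ≤ B i j) (hk : k ≠ 0)
    (heig : ∀ lam : ℂ, IsEigenvalue B lam → ‖lam‖ < s) {b : Fin n → ℝ} (hb : ∀ i, 0 ≤ b i) :
    ∃ u, IsSupersolution B s b u := by
  obtain ⟨v, ε, hε, hv⟩ := exists_isSupersolution_const hB hk heig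
  have hbε (i : Fin n) : 0 ≤ b i / ε := div_nonneg (hb i) hε.le
  set t := 1 + ∑ i, b i / ε
  have ht : 1 ≤ t := by linarith [Finset.sum_nonneg fun i (_ : i ∈ Finset.univ) => hbε i]
  refine ⟨t • v, (hv.smul (by linarith)).anti_const fun i => ?_⟩
  have hbt : b i / ε ≤ t := by
    linarith [Finset.single_le_sum (fun j _ => hbε j) (Finset.mem_univ i)]
  have htk : t ≤ t ^ k := le_self_pow₀ ht hk
  rw [div_le_iff₀ hε] at hbt
  simp only [Pi.smul_apply, smul_eq_mul]
  nlinarith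

end Semipositivity

/-- For a strong M-tensor `A` and `b ≥ 0`, `(P₁)` has a unique optimal solution,
which is also an optimal solution of `(P₀)`. -/
theorem stmt12 {n m : ℕ} (hm : 2 ≤ m) (A : Fin n → (Fin (m - 1) → Fin n) → ℝ)
    (hA : IsStrongMTensor A) (b : Fin n → ℝ) (hb : ∀ i, 0 ≤ b i) :
    ∃ xs : Fin n → ℝ,
      -- xs is the unique optimal solution of (P₁)
      ((∀ i, 0 ≤ xs i) ∧ ∀ i, tApply A xs i - b i = 0) ∧
      (∀ y : Fin n → ℝ, ((∀ i, 0 ≤ y i) ∧ ∀ i, tApply A y i - b i = 0) →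
        (∑ i, xs i ≤ ∑ i, y i) ∧ (∑ i, y i = ∑ i, xs i → y = xs)) ∧
      -- xs is an optimal solution of (P₀)
      ((∀ i, 0 ≤ xs i) ∧ (∀ i, b i ≤ tApply A xs i) ∧
        ∑ i, xs i * (tApply A xs i - b i) = 0) ∧
      (∀ x : Fin n → ℝ, ((∀ i, 0 ≤ x i) ∧ (∀ i, b i ≤ tApply A x i) ∧
        ∑ i, x i * (tApply A x i - b i) = 0) → l0 xs ≤ l0 x) := by
  obtain ⟨s, B, -, hB, heig, hAB⟩ := hA
  have hk : m - 1 ≠ 0 := by omega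
  have hne := exists_isSupersolution hB hk heig hb
  set xs := leastSupersolution B s b
  have hxs := isSupersolution_leastSupersolution hB hne
  have hsol (i : Fin n) : tApply A xs i = b i := by
    rw [tApply_eq_mul_pow_sub hAB]
    linarith [tApply_leastSupersolution hB hk hb hne i]
  have hleast (x : Fin n → ℝ) (hx : ∀ i, 0 ≤ x i) (hAx : ∀ i, b i ≤ tApply A x i) : xs ≤ x :=
    leastSupersolution_le ((isSupersolution_iff_le_tApply hAB hx).2 hAx)
  refine ⟨xs, ⟨hxs.1, fun i => by rw [hsol, sub_self]⟩, fun y ⟨hy, hAy⟩ => ?_,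
    ⟨hxs.1, fun i => (hsol i).ge, by simp [hsol]⟩,
    fun x ⟨hx, hAx, _⟩ => l0_mono hxs.1 (hleast x hx hAx)⟩
  have hxy := hleast y hy fun i => (sub_eq_zero.1 (hAy i)).ge
  refine ⟨Finset.sum_le_sum fun i _ => hxy i, fun hsum => funext fun i => ?_⟩
  exact ((Finset.sum_eq_sum_iff_of_le fun i _ => hxy i).1 hsum.symm i (Finset.mem_univ i)).symm
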